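/- arXiv:1309.5740 — 3 statements merged into one kernel-verified Lean document; each statement's English description precedes it below -/
import Mathlib

section
/- Let Z₁ and Z₂ be independent standard (mean 0, variance 1) Gaussian random variables and let t ∈ ℝ. Then exp(t Z₁ Z₂) is integrable if and only if |t| < 1, and in that case E[exp(t Z₁ Z₂)] = (1 − t²)^{−1/2}. -/
/-!
Integrating out `Z₂` first, the Gaussian moment generating function gives
`E[exp (t Z₁ Z₂) | Z₁] = exp (t² Z₁² / 2)`, so everything reduces to the one-dimensional
integral `E[exp (t² Z₁² / 2)] = (2π)^{-1/2} ∫ exp (-(1 - t²) x² / 2) dx`, which is the Gaussian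
integral `(1 - t²)^{-1/2}` when `t² < 1` and diverges otherwise. Working with lower Lebesgue
integrals (Tonelli) makes the integrability question and the value one computation.
-/

open scoped NNReal
open MeasureTheory ProbabilityTheory Real ENNReal

lemma lintegral_exp_mul_gaussianReal (m : ℝ) (v : ℝ≥0) (s : ℝ) :
    ∫⁻ x, ENNReal.ofReal (exp (s * x)) ∂gaussianReal m v
      = ENNReal.ofReal (exp (m * s + v * s ^ 2 / 2)) := by
  rw [← ofReal_integral_eq_lintegral_ofReal (integrable_exp_mul_gaussianReal s)
    (ae_of_all _ fun _ ↦ (exp_pos _).le)]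
  exact congrArg ENNReal.ofReal (congrFun mgf_fun_id_gaussianReal s)

lemma lintegral_exp_mul_mul_prod_gaussianReal (μ : Measure ℝ) (v : ℝ≥0) (t : ℝ) :
    ∫⁻ p, ENNReal.ofReal (exp (t * p.1 * p.2)) ∂(μ.prod (gaussianReal 0 v))
      = ∫⁻ x, ENNReal.ofReal (exp (t ^ 2 * v * x ^ 2 / 2)) ∂μ := by
  rw [lintegral_prod _ (by fun_prop)]
  refine lintegral_congr fun x ↦ ?_
  dsimp only
  rw [lintegral_exp_mul_gaussianReal]
  congr 2
  ring

lemma lintegral_exp_neg_mul_sq_of_pos {b : ℝ} (hb : 0 < b) :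
    ∫⁻ x : ℝ, ENNReal.ofReal (exp (-b * x ^ 2)) = ENNReal.ofReal √(π / b) := by
  rw [← ofReal_integral_eq_lintegral_ofReal (integrable_exp_neg_mul_sq hb)
    (ae_of_all _ fun _ ↦ (exp_pos _).le), integral_gaussian]

lemma lintegral_exp_neg_mul_sq_of_nonpos {b : ℝ} (hb : b ≤ 0) :
    ∫⁻ x : ℝ, ENNReal.ofReal (exp (-b * x ^ 2)) = ∞ := by
  refine eq_top_iff.2 ?_
  calc ∞ = ∫⁻ _ : ℝ, 1 := by simp
    _ ≤ _ := lintegral_mono fun x ↦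
      ENNReal.one_le_ofReal.2 (one_le_exp (by nlinarith [sq_nonneg x]))

lemma lintegral_exp_mul_sq_gaussianReal_eq {v : ℝ≥0} (hv : v ≠ 0) (a : ℝ) :
    ∫⁻ x, ENNReal.ofReal (exp (a * x ^ 2 / 2)) ∂gaussianReal 0 v
      = ENNReal.ofReal (√(2 * π * v))⁻¹ *
          ∫⁻ x : ℝ, ENNReal.ofReal (exp (-(((v : ℝ)⁻¹ - a) / 2) * x ^ 2)) := by
  rw [gaussianReal_of_var_ne_zero 0 hv,
    lintegral_withDensity_eq_lintegral_mul _ (measurable_gaussianPDF 0 v) (by fun_prop),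
    ← lintegral_const_mul _ (by fun_prop)]
  refine lintegral_congr fun x ↦ ?_
  have hv' : (v : ℝ) ≠ 0 := by exact_mod_cast hv
  rw [Pi.mul_apply, gaussianPDF, ← ENNReal.ofReal_mul (gaussianPDFReal_nonneg 0 v x),
    ← ENNReal.ofReal_mul (by positivity), gaussianPDFReal, mul_assoc, ← exp_add]
  congr 3
  field_simp
  ring

lemma lintegral_exp_mul_sq_gaussianReal_of_mul_lt_one {v : ℝ≥0} (hv : v ≠ 0) {a : ℝ}
    (ha : a * v < 1) :
    ∫⁻ x, ENNReal.ofReal (exp (a * x ^ 2 / 2)) ∂gaussianReal 0 v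
      = ENNReal.ofReal (√(1 - a * v))⁻¹ := by
  have hv' : 0 < (v : ℝ) := by positivity
  have hb : 0 < ((v : ℝ)⁻¹ - a) / 2 := by
    have : a < 1 / v := (lt_div_iff₀ hv').2 ha
    rw [one_div] at this
    linarith
  rw [lintegral_exp_mul_sq_gaussianReal_eq hv, lintegral_exp_neg_mul_sq_of_pos hb,
    ← ENNReal.ofReal_mul (by positivity)]
  congr 1
  have h1 : 0 < 1 - a * v := by linarith
  rw [show π / (((v : ℝ)⁻¹ - a) / 2) = 2 * π * v / (1 - a * v) by field_simp,
    sqrt_div' _ h1.le]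
  have : √(2 * π * v) ≠ 0 := by positivity
  field_simp

lemma lintegral_exp_mul_sq_gaussianReal_of_one_le_mul {v : ℝ≥0} (hv : v ≠ 0) {a : ℝ}
    (ha : 1 ≤ a * v) :
    ∫⁻ x, ENNReal.ofReal (exp (a * x ^ 2 / 2)) ∂gaussianReal 0 v = ∞ := by
  have hv' : 0 < (v : ℝ) := by positivity
  have hb : ((v : ℝ)⁻¹ - a) / 2 ≤ 0 := by
    have : 1 / v ≤ a := (div_le_iff₀ hv').2 ha
    rw [one_div] at this
    linarith
  rw [lintegral_exp_mul_sq_gaussianReal_eq hv, lintegral_exp_neg_mul_sq_of_nonpos hb,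
    ENNReal.mul_top (by simp [hv', pi_pos])]

theorem exp_prod_gaussians_integrable_iff {Ω : Type*} [MeasurableSpace Ω]
    (μ : Measure Ω) [IsProbabilityMeasure μ] (Z₁ Z₂ : Ω → ℝ)
    (h₁ : Measure.map Z₁ μ = gaussianReal 0 1)
    (h₂ : Measure.map Z₂ μ = gaussianReal 0 1)
    (hmeas₁ : Measurable Z₁) (hmeas₂ : Measurable Z₂)
    (hindep : IndepFun Z₁ Z₂ μ) (t : ℝ) :
    (Integrable (fun ω => Real.exp (t * Z₁ ω * Z₂ ω)) μ ↔ |t| < 1) ∧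
      (|t| < 1 →
        ∫ ω, Real.exp (t * Z₁ ω * Z₂ ω) ∂μ = (Real.sqrt (1 - t ^ 2))⁻¹) := by
  have hlaw : μ.map (fun ω ↦ (Z₁ ω, Z₂ ω)) = (gaussianReal 0 1).prod (gaussianReal 0 1) := by
    rw [(indepFun_iff_map_prod_eq_prod_map_map hmeas₁.aemeasurable hmeas₂.aemeasurable).1 hindep,
      h₁, h₂]
  have hlint : ∫⁻ ω, ENNReal.ofReal (exp (t * Z₁ ω * Z₂ ω)) ∂μ
      = ∫⁻ x, ENNReal.ofReal (exp (t ^ 2 * x ^ 2 / 2)) ∂gaussianReal 0 1 := by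
    calc ∫⁻ ω, ENNReal.ofReal (exp (t * Z₁ ω * Z₂ ω)) ∂μ
        = ∫⁻ p, ENNReal.ofReal (exp (t * p.1 * p.2)) ∂μ.map (fun ω ↦ (Z₁ ω, Z₂ ω)) :=
          (lintegral_map (f := fun p ↦ ENNReal.ofReal (exp (t * p.1 * p.2))) (by fun_prop)
            (hmeas₁.prodMk hmeas₂)).symm
      _ = _ := by rw [hlaw, lintegral_exp_mul_mul_prod_gaussianReal]; simp
  have hpos : 0 ≤ᵐ[μ] fun ω ↦ exp (t * Z₁ ω * Z₂ ω) := ae_of_all _ fun _ ↦ (exp_pos _).le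
  have hsq_lt : |t| < 1 → t ^ 2 * ((1 : ℝ≥0) : ℝ) < 1 := by simp [sq_lt_one_iff_abs_lt_one]
  have hint : Integrable (fun ω ↦ exp (t * Z₁ ω * Z₂ ω)) μ ↔ |t| < 1 := by
    rw [← lintegral_ofReal_ne_top_iff_integrable (by fun_prop) hpos, hlint]
    rcases lt_or_ge |t| 1 with ht | ht
    · simp [ht, lintegral_exp_mul_sq_gaussianReal_of_mul_lt_one one_ne_zero (hsq_lt ht)]
    · simp [ht.not_gt, lintegral_exp_mul_sq_gaussianReal_of_one_le_mul one_ne_zero (a := t ^ 2)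
        (by simpa [one_le_sq_iff_one_le_abs] using ht)]
  refine ⟨hint, fun ht ↦ ?_⟩
  rw [integral_eq_lintegral_of_nonneg_ae hpos (by fun_prop), hlint,
    lintegral_exp_mul_sq_gaussianReal_of_mul_lt_one one_ne_zero (hsq_lt ht),
    toReal_ofReal (by positivity)]
  simp
end

section
/- Let 0 < |ρ| < 1 and let (Z_i)_{i≥1} be a sequence of independent standard Gaussian random variables. Then the U-statistic means converge in probability: (p choose 2)⁻¹ · Σ_{1 ≤ u < v ≤ p} exp(−ρ Z_u Z_v) → (1 − ρ²)^{−1/2} as p → ∞. -/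
/-!
The kernel `h(x, y) = exp (-ρ x y)` is integrable for the product of two standard Gaussians
exactly when `ρ² < 1`: integrating out `y` gives `exp (ρ² x² / 2)`, and then
`E[h(Z₁, Z₂)] = (1 - ρ²)^(-1/2)`. The theorem is therefore the weak law of large numbers for the
U-statistic of an integrable kernel of two i.i.d. arguments. For a bounded kernel it follows from
Chebyshev's inequality, since `h(Z_u, Z_v)` and `h(Z_u', Z_v')` are independent unless the pairs
share an index, so the variance of the U-statistic is `O(1/p)`. The kernel `h` itself need not be
square integrable (for `|ρ| ≥ 1/2` it is not), so it is truncated at level `n`: this moves the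
U-statistic by at most `E|h - h_n|` in `L¹`, uniformly in `p`, which tends to zero by dominated
convergence, and Markov's inequality turns this into closeness in probability.
-/

open MeasureTheory ProbabilityTheory Filter Finset Real
open scoped ENNReal Topology

lemma integral_exp_mul_gaussianReal (t : ℝ) :
    ∫ x, rexp (t * x) ∂gaussianReal 0 1 = rexp (t ^ 2 / 2) := by
  simpa [mgf] using congrFun (mgf_fun_id_gaussianReal (μ := 0) (v := 1)) t

lemma integral_exp_mul_sq_gaussianReal {c : ℝ} (hc : c < 1 / 2) :
    ∫ x, rexp (c * x ^ 2) ∂gaussianReal 0 1 = (√(1 - 2 * c))⁻¹ := by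
  have hpdf (x : ℝ) : gaussianPDFReal 0 1 x • rexp (c * x ^ 2)
      = (√(2 * π))⁻¹ * rexp (-(1 / 2 - c) * x ^ 2) := by
    rw [gaussianPDFReal, smul_eq_mul, mul_assoc, ← exp_add]
    congr 2
    · simp
    · push_cast; ring
  simp_rw [integral_gaussianReal_eq_integral_smul one_ne_zero, hpdf, integral_const_mul,
    integral_gaussian]
  have h2c : 0 < 1 - 2 * c := by linarith
  rw [show π / (1 / 2 - c) = 2 * π / (1 - 2 * c) by field_simp, sqrt_div' _ h2c.le]
  field_simp

lemma integrable_exp_mul_sq_gaussianReal {c : ℝ} (hc : c < 1 / 2) :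
    Integrable (fun x ↦ rexp (c * x ^ 2)) (gaussianReal 0 1) :=
  .of_integral_ne_zero <| by
    rw [integral_exp_mul_sq_gaussianReal hc]
    exact (inv_pos.2 (sqrt_pos.2 (by linarith))).ne'

lemma integrable_exp_neg_mul_mul_gaussianReal_prod {ρ : ℝ} (hρ : ρ ^ 2 < 1) :
    Integrable (fun z : ℝ × ℝ ↦ rexp (-ρ * z.1 * z.2))
      ((gaussianReal 0 1).prod (gaussianReal 0 1)) := by
  refine (integrable_prod_iff (by fun_prop)).2
    ⟨.of_forall fun x ↦ integrable_exp_mul_gaussianReal (-ρ * x), ?_⟩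
  simp only [norm_eq_abs, abs_exp, integral_exp_mul_gaussianReal, mul_pow, neg_sq]
  simpa [mul_div_right_comm] using integrable_exp_mul_sq_gaussianReal (c := ρ ^ 2 / 2) (by linarith)

lemma integral_exp_neg_mul_mul_gaussianReal_prod {ρ : ℝ} (hρ : ρ ^ 2 < 1) :
    ∫ z, rexp (-ρ * z.1 * z.2) ∂(gaussianReal 0 1).prod (gaussianReal 0 1)
      = (√(1 - ρ ^ 2))⁻¹ := by
  rw [integral_prod _ (integrable_exp_neg_mul_mul_gaussianReal_prod hρ)]
  simp only [integral_exp_mul_gaussianReal, mul_pow, neg_sq]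
  rw [← mul_div_cancel₀ (ρ ^ 2) (two_ne_zero (α := ℝ)),
    ← integral_exp_mul_sq_gaussianReal (by linarith)]
  simp [mul_div_right_comm]

def increasingPairs (p : ℕ) : Finset (ℕ × ℕ) := {e ∈ range p ×ˢ range p | e.1 < e.2}

lemma mem_increasingPairs {p : ℕ} {e : ℕ × ℕ} :
    e ∈ increasingPairs p ↔ e.1 < e.2 ∧ e.2 < p := by
  simp only [increasingPairs, mem_filter, mem_product, mem_range]
  omega

lemma ne_of_mem_increasingPairs {p : ℕ} {e : ℕ × ℕ} (he : e ∈ increasingPairs p) : e.1 ≠ e.2 :=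
  (mem_increasingPairs.1 he).1.ne

lemma sum_range_sum_Ioo_eq_sum_increasingPairs {M : Type*} [AddCommMonoid M] (p : ℕ)
    (f : ℕ → ℕ → M) :
    ∑ u ∈ range p, ∑ v ∈ Ioo u p, f u v = ∑ e ∈ increasingPairs p, f e.1 e.2 := by
  rw [increasingPairs, sum_filter, sum_product]
  refine sum_congr rfl fun u _ ↦ ?_
  rw [← sum_filter]
  congr 1
  ext v
  simp only [mem_filter, mem_range, mem_Ioo]
  omega

lemma card_increasingPairs (p : ℕ) : #(increasingPairs p) = p.choose 2 := by
  rw [card_eq_sum_ones, ← sum_range_sum_Ioo_eq_sum_increasingPairs p (fun _ _ ↦ 1)]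
  simp only [← card_eq_sum_ones, Nat.card_Ioo]
  rw [← sum_range_reflect, Nat.choose_two_right, ← sum_range_id]
  refine sum_congr rfl fun u hu ↦ ?_
  rw [mem_range] at hu
  omega

lemma card_increasingPairs_meeting_le (p u v : ℕ) :
    #{e ∈ increasingPairs p | e.1 = u ∨ e.1 = v ∨ e.2 = u ∨ e.2 = v} ≤ 4 * p := by
  have hsub : {e ∈ increasingPairs p | e.1 = u ∨ e.1 = v ∨ e.2 = u ∨ e.2 = v}
      ⊆ ({u, v} ×ˢ range p) ∪ (range p ×ˢ {u, v}) := by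
    intro e he
    rw [mem_filter, mem_increasingPairs] at he
    simp only [mem_union, mem_product, mem_insert, mem_singleton, mem_range]
    omega
  calc _ ≤ #(({u, v} ×ˢ range p) ∪ (range p ×ˢ {u, v})) := card_le_card hsub
    _ ≤ #({u, v} ×ˢ range p) + #(range p ×ˢ {u, v}) := card_union_le _ _
    _ ≤ 2 * p + p * 2 := by
      rw [card_product, card_product, card_range]
      gcongr <;> exact card_le_two
    _ = 4 * p := by ring

lemma tendsto_natCast_div_choose_two :
    Tendsto (fun p : ℕ ↦ (p : ℝ) / p.choose 2) atTop (𝓝 0) := by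
  have h : (fun p : ℕ ↦ 2 / ((p : ℝ) - 1)) =ᶠ[atTop] fun p ↦ (p : ℝ) / p.choose 2 := by
    filter_upwards [eventually_gt_atTop 1] with p hp
    have : (1 : ℝ) < p := by exact_mod_cast hp
    rw [Nat.cast_choose_two]
    field_simp
  refine (Tendsto.div_atTop tendsto_const_nhds ?_).congr' h
  exact tendsto_atTop_add_const_right _ (-1) tendsto_natCast_atTop_atTop

lemma ENNReal.div_three_le_or_of_le_add_add {a b c d : ℝ≥0∞} (h : d ≤ a + b + c) :
    d / 3 ≤ a ∨ d / 3 ≤ b ∨ d / 3 ≤ c := by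
  by_contra! hlt
  have := ENNReal.add_lt_add (ENNReal.add_lt_add hlt.1 hlt.2.1) hlt.2.2
  rw [ENNReal.add_thirds] at this
  exact (h.trans_lt this).false

theorem tendstoInMeasure_of_lintegral_approx {Ω ι E : Type*} [MeasurableSpace Ω] {μ : Measure Ω}
    [NormedAddCommGroup E] {l : Filter ι} {f : ι → Ω → E} {F : Ω → E} {g : ℕ → ι → Ω → E}
    {G : ℕ → Ω → E} {a : ℕ → ℝ≥0∞} (hg : ∀ n, TendstoInMeasure μ (g n) l (G n))
    (hfg_meas : ∀ n i, AEStronglyMeasurable (f i - g n i) μ)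
    (hfg : ∀ n i, ∫⁻ ω, ‖f i ω - g n i ω‖ₑ ∂μ ≤ a n)
    (hGF_meas : ∀ n, AEStronglyMeasurable (G n - F) μ)
    (hGF : ∀ n, ∫⁻ ω, ‖G n ω - F ω‖ₑ ∂μ ≤ a n) (ha : Tendsto a atTop (𝓝 0)) :
    TendstoInMeasure μ f l F := by
  rw [tendstoInMeasure_iff_enorm]
  intro ε hε hε_top
  have hε3 : ε / 3 ≠ 0 := ENNReal.div_ne_zero.2 ⟨hε.ne', by simp⟩
  have hε3_top : ε / 3 ≠ ∞ := ENNReal.div_ne_top hε_top (by simp)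
  rw [ENNReal.tendsto_nhds_zero]
  intro δ hδ
  have hδ3 : 0 < δ / 3 := ENNReal.div_pos hδ.ne' (by simp)
  obtain ⟨n, hn⟩ := (ENNReal.tendsto_nhds_zero.1
    (by simpa using ENNReal.Tendsto.div_const ha (Or.inr hε3)) (δ / 3) hδ3).exists
  filter_upwards [ENNReal.tendsto_nhds_zero.1
    (tendstoInMeasure_iff_enorm.1 (hg n) (ε / 3) (pos_iff_ne_zero.2 hε3) hε3_top) (δ / 3) hδ3]
    with i hi
  have hsplit : {ω | ε ≤ ‖f i ω - F ω‖ₑ} ⊆ {ω | ε / 3 ≤ ‖(f i - g n i) ω‖ₑ}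
      ∪ {ω | ε / 3 ≤ ‖g n i ω - G n ω‖ₑ} ∪ {ω | ε / 3 ≤ ‖(G n - F) ω‖ₑ} := by
    intro ω hω
    have htri : ‖f i ω - F ω‖ₑ
        ≤ ‖f i ω - g n i ω‖ₑ + ‖g n i ω - G n ω‖ₑ + ‖G n ω - F ω‖ₑ := by
      simp only [← edist_eq_enorm_sub]
      exact (edist_triangle _ (G n ω) _).trans (by gcongr; exact edist_triangle _ _ _)
    simpa [or_assoc] using ENNReal.div_three_le_or_of_le_add_add (hω.trans htri)
  have markov {h : Ω → E} (hh : AEStronglyMeasurable h μ) {b : ℝ≥0∞}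
      (hb : ∫⁻ ω, ‖h ω‖ₑ ∂μ ≤ b) (hbδ : b / (ε / 3) ≤ δ / 3) :
      μ {ω | ε / 3 ≤ ‖h ω‖ₑ} ≤ δ / 3 :=
    (meas_ge_le_lintegral_div hh.enorm hε3 hε3_top).trans <|
      (ENNReal.div_le_div_right hb _).trans hbδ
  calc μ {ω | ε ≤ ‖f i ω - F ω‖ₑ}
      ≤ μ {ω | ε / 3 ≤ ‖(f i - g n i) ω‖ₑ} + μ {ω | ε / 3 ≤ ‖g n i ω - G n ω‖ₑ}
        + μ {ω | ε / 3 ≤ ‖(G n - F) ω‖ₑ} :=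
      (measure_mono hsplit).trans <| (measure_union_le _ _).trans <| by
        gcongr; exact measure_union_le _ _
    _ ≤ δ / 3 + δ / 3 + δ / 3 := by
      gcongr
      · exact markov (hfg_meas n i) (hfg n i) hn
      · exact markov (hGF_meas n) (hGF n) hn
    _ = δ := ENNReal.add_thirds δ

lemma tendsto_lintegral_enorm_sub_truncation {α : Type*} [MeasurableSpace α] {μ : Measure α}
    {g : α → ℝ} (hg : Integrable g μ) :
    Tendsto (fun n : ℕ ↦ ∫⁻ z, ‖g z - truncation g n z‖ₑ ∂μ) atTop (𝓝 0) := by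
  have hlim (z : α) : Tendsto (fun n : ℕ ↦ truncation g n z) atTop (𝓝 (g z)) := by
    refine tendsto_const_nhds.congr' ?_
    filter_upwards [eventually_gt_atTop ⌈|g z|⌉₊] with n hn
    exact (truncation_eq_self ((Nat.le_ceil _).trans_lt (by exact_mod_cast hn))).symm
  convert tendsto_lintegral_norm_of_dominated_convergence
    (fun n ↦ hg.aestronglyMeasurable.truncation) hg.norm.hasFiniteIntegral
    (fun n ↦ .of_forall fun z ↦ abs_truncation_le_abs_self g n z) (.of_forall hlim) using 3 with n
  ext z
  rw [ofReal_norm, enorm_sub_rev]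

section UStatistic

variable {Ω α : Type*}

noncomputable def uStat (g : α × α → ℝ) (Z : ℕ → Ω → α) (p : ℕ) (ω : Ω) : ℝ :=
  (p.choose 2 : ℝ)⁻¹ * ∑ e ∈ increasingPairs p, g (Z e.1 ω, Z e.2 ω)

lemma uStat_sub (g₁ g₂ : α × α → ℝ) (Z : ℕ → Ω → α) (p : ℕ) (ω : Ω) :
    uStat g₁ Z p ω - uStat g₂ Z p ω = uStat (g₁ - g₂) Z p ω := by
  simp only [uStat, Pi.sub_apply, sum_sub_distrib, mul_sub]

lemma uStat_sub_const (g : α × α → ℝ) (c : ℝ) (Z : ℕ → Ω → α) {p : ℕ} (hp : 2 ≤ p) (ω : Ω) :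
    uStat (fun z ↦ g z - c) Z p ω = uStat g Z p ω - c := by
  have hN : (p.choose 2 : ℝ) ≠ 0 := by exact_mod_cast (Nat.choose_pos hp).ne'
  simp only [uStat, sum_sub_distrib, sum_const, card_increasingPairs, nsmul_eq_mul, mul_sub,
    inv_mul_cancel_left₀ hN]

variable [MeasurableSpace Ω] [MeasurableSpace α] {μ : Measure Ω} {ν : Measure α}
  {Z : ℕ → Ω → α}

lemma aemeasurable_of_map_eq [NeZero ν] (hZ : ∀ i, μ.map (Z i) = ν) (i : ℕ) :
    AEMeasurable (Z i) μ :=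
  .of_map_ne_zero <| hZ i ▸ NeZero.ne ν

lemma aemeasurable_pair [NeZero ν] (hZ : ∀ i, μ.map (Z i) = ν) (u v : ℕ) :
    AEMeasurable (fun ω ↦ (Z u ω, Z v ω)) μ :=
  (aemeasurable_of_map_eq hZ u).prodMk (aemeasurable_of_map_eq hZ v)

variable [IsProbabilityMeasure μ] [IsProbabilityMeasure ν]

lemma map_pair_eq_prod (hZ : ∀ i, μ.map (Z i) = ν) (hindep : iIndepFun Z μ) {u v : ℕ}
    (huv : u ≠ v) : μ.map (fun ω ↦ (Z u ω, Z v ω)) = ν.prod ν := by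
  rw [(indepFun_iff_map_prod_eq_prod_map_map (aemeasurable_of_map_eq hZ u)
    (aemeasurable_of_map_eq hZ v)).1 (hindep.indepFun huv), hZ u, hZ v]

lemma aestronglyMeasurable_comp_pair (hZ : ∀ i, μ.map (Z i) = ν) (hindep : iIndepFun Z μ)
    {g : α × α → ℝ} (hg : AEStronglyMeasurable g (ν.prod ν)) {u v : ℕ} (huv : u ≠ v) :
    AEStronglyMeasurable (fun ω ↦ g (Z u ω, Z v ω)) μ := by
  rw [← map_pair_eq_prod hZ hindep huv] at hg
  exact hg.comp_aemeasurable (aemeasurable_pair hZ u v)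

lemma integrable_comp_pair (hZ : ∀ i, μ.map (Z i) = ν) (hindep : iIndepFun Z μ)
    {g : α × α → ℝ} (hg : Integrable g (ν.prod ν)) {u v : ℕ} (huv : u ≠ v) :
    Integrable (fun ω ↦ g (Z u ω, Z v ω)) μ := by
  rw [← map_pair_eq_prod hZ hindep huv] at hg
  exact hg.comp_aemeasurable (aemeasurable_pair hZ u v)

lemma integral_comp_pair (hZ : ∀ i, μ.map (Z i) = ν) (hindep : iIndepFun Z μ)
    {g : α × α → ℝ} (hg : AEStronglyMeasurable g (ν.prod ν)) {u v : ℕ} (huv : u ≠ v) :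
    ∫ ω, g (Z u ω, Z v ω) ∂μ = ∫ z, g z ∂(ν.prod ν) := by
  rw [← map_pair_eq_prod hZ hindep huv] at hg ⊢
  exact (integral_map (aemeasurable_pair hZ u v) hg).symm

lemma lintegral_enorm_comp_pair (hZ : ∀ i, μ.map (Z i) = ν) (hindep : iIndepFun Z μ)
    {g : α × α → ℝ} (hg : AEStronglyMeasurable g (ν.prod ν)) {u v : ℕ} (huv : u ≠ v) :
    ∫⁻ ω, ‖g (Z u ω, Z v ω)‖ₑ ∂μ = ∫⁻ z, ‖g z‖ₑ ∂(ν.prod ν) := by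
  rw [← map_pair_eq_prod hZ hindep huv] at hg ⊢
  exact (lintegral_map' hg.enorm (aemeasurable_pair hZ u v)).symm

lemma integral_comp_pair_mul_comp_pair (hZ : ∀ i, μ.map (Z i) = ν) (hindep : iIndepFun Z μ)
    {g₁ g₂ : α × α → ℝ} (hg₁ : AEStronglyMeasurable g₁ (ν.prod ν))
    (hg₂ : AEStronglyMeasurable g₂ (ν.prod ν)) {u v u' v' : ℕ} (huv : u ≠ v) (hu'v' : u' ≠ v')
    (huu' : u ≠ u') (huv' : u ≠ v') (hvu' : v ≠ u') (hvv' : v ≠ v') :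
    ∫ ω, g₁ (Z u ω, Z v ω) * g₂ (Z u' ω, Z v' ω) ∂μ
      = (∫ z, g₁ z ∂(ν.prod ν)) * ∫ z, g₂ z ∂(ν.prod ν) := by
  have hind := (hindep.indepFun_prodMk_prodMk₀ (aemeasurable_of_map_eq hZ) u v u' v'
    huu' huv' hvu' hvv').comp₀ (aemeasurable_pair hZ u v) (aemeasurable_pair hZ u' v')
    (by rw [map_pair_eq_prod hZ hindep huv]; exact hg₁.aemeasurable)
    (by rw [map_pair_eq_prod hZ hindep hu'v']; exact hg₂.aemeasurable)
  rw [← integral_comp_pair hZ hindep hg₁ huv, ← integral_comp_pair hZ hindep hg₂ hu'v']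
  exact hind.integral_fun_mul_eq_mul_integral (aestronglyMeasurable_comp_pair hZ hindep hg₁ huv)
    (aestronglyMeasurable_comp_pair hZ hindep hg₂ hu'v')

lemma aestronglyMeasurable_uStat (hZ : ∀ i, μ.map (Z i) = ν) (hindep : iIndepFun Z μ)
    {g : α × α → ℝ} (hg : AEStronglyMeasurable g (ν.prod ν)) (p : ℕ) :
    AEStronglyMeasurable (uStat g Z p) μ :=
  (Finset.aestronglyMeasurable_fun_sum _ fun _ he ↦ aestronglyMeasurable_comp_pair hZ hindep hg
    (ne_of_mem_increasingPairs he)).const_mul _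

lemma integral_sq_sum_increasingPairs_le (hZ : ∀ i, μ.map (Z i) = ν) (hindep : iIndepFun Z μ)
    {g : α × α → ℝ} (hg : AEStronglyMeasurable g (ν.prod ν)) {C : ℝ} (hC : ∀ z, |g z| ≤ C)
    (hg0 : ∫ z, g z ∂(ν.prod ν) = 0) (p : ℕ) :
    ∫ ω, (∑ e ∈ increasingPairs p, g (Z e.1 ω, Z e.2 ω)) ^ 2 ∂μ
      ≤ p.choose 2 * (4 * p * C ^ 2) := by
  set G : ℕ × ℕ → Ω → ℝ := fun e ω ↦ g (Z e.1 ω, Z e.2 ω)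
  have hbound (e e' : ℕ × ℕ) (ω : Ω) : ‖G e ω * G e' ω‖ ≤ C ^ 2 := by
    rw [norm_mul, sq]
    exact mul_le_mul (hC _) (hC _) (abs_nonneg _) ((abs_nonneg _).trans (hC (Z e.1 ω, Z e.2 ω)))
  have hint {e e'} (he : e ∈ increasingPairs p) (he' : e' ∈ increasingPairs p) :
      Integrable (fun ω ↦ G e ω * G e' ω) μ :=
    .of_bound ((aestronglyMeasurable_comp_pair hZ hindep hg (ne_of_mem_increasingPairs he)).mul
      (aestronglyMeasurable_comp_pair hZ hindep hg (ne_of_mem_increasingPairs he'))) _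
      (.of_forall (hbound e e'))
  -- only pairs sharing an index are correlated
  have hcov {e e'} (he : e ∈ increasingPairs p) (he' : e' ∈ increasingPairs p) :
      ∫ ω, G e ω * G e' ω ∂μ
        ≤ if e'.1 = e.1 ∨ e'.1 = e.2 ∨ e'.2 = e.1 ∨ e'.2 = e.2 then C ^ 2 else 0 := by
    split_ifs with hmeet
    · simpa using (le_abs_self _).trans
        (norm_integral_le_of_norm_le_const (μ := μ) (.of_forall (hbound e e')))
    · simp only [not_or] at hmeet
      obtain ⟨h₁, h₂, h₃, h₄⟩ := hmeet
      rw [integral_comp_pair_mul_comp_pair hZ hindep hg hg (ne_of_mem_increasingPairs he)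
        (ne_of_mem_increasingPairs he') (Ne.symm h₁)
        (Ne.symm h₃) (Ne.symm h₂) (Ne.symm h₄), hg0, zero_mul]
  calc ∫ ω, (∑ e ∈ increasingPairs p, G e ω) ^ 2 ∂μ
      = ∑ e ∈ increasingPairs p, ∑ e' ∈ increasingPairs p, ∫ ω, G e ω * G e' ω ∂μ := by
        simp_rw [sq, sum_mul_sum]
        rw [integral_finsetSum _ fun e he ↦ integrable_finsetSum _ fun e' he' ↦ hint he he']
        exact sum_congr rfl fun e he ↦ integral_finsetSum _ fun e' he' ↦ hint he he'
    _ ≤ ∑ e ∈ increasingPairs p, ∑ e' ∈ increasingPairs p,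
          if e'.1 = e.1 ∨ e'.1 = e.2 ∨ e'.2 = e.1 ∨ e'.2 = e.2 then C ^ 2 else 0 :=
        sum_le_sum fun e he ↦ sum_le_sum fun e' he' ↦ hcov he he'
    _ ≤ ∑ e ∈ increasingPairs p, 4 * p * C ^ 2 := by
        refine sum_le_sum fun e _ ↦ ?_
        rw [sum_ite, sum_const, sum_const_zero, add_zero, nsmul_eq_mul]
        gcongr
        exact_mod_cast card_increasingPairs_meeting_le p e.1 e.2
    _ = p.choose 2 * (4 * p * C ^ 2) := by
        rw [sum_const, card_increasingPairs, nsmul_eq_mul]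

lemma integral_uStat_eq_zero (hZ : ∀ i, μ.map (Z i) = ν) (hindep : iIndepFun Z μ)
    {g : α × α → ℝ} (hg : Integrable g (ν.prod ν)) (hg0 : ∫ z, g z ∂(ν.prod ν) = 0) (p : ℕ) :
    ∫ ω, uStat g Z p ω ∂μ = 0 := by
  simp only [uStat]
  rw [integral_const_mul,
    integral_finsetSum _ fun e he ↦
      integrable_comp_pair hZ hindep hg (ne_of_mem_increasingPairs he),
    sum_congr rfl fun e he ↦
      (integral_comp_pair hZ hindep hg.1 (ne_of_mem_increasingPairs he)).trans hg0,
    sum_const_zero, mul_zero]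

lemma variance_uStat_le (hZ : ∀ i, μ.map (Z i) = ν) (hindep : iIndepFun Z μ)
    {g : α × α → ℝ} (hg : AEStronglyMeasurable g (ν.prod ν)) {C : ℝ} (hC : ∀ z, |g z| ≤ C)
    (hg0 : ∫ z, g z ∂(ν.prod ν) = 0) (p : ℕ) :
    variance (uStat g Z p) μ ≤ 4 * C ^ 2 * (p / p.choose 2) := by
  rw [variance_of_integral_eq_zero (aestronglyMeasurable_uStat hZ hindep hg p).aemeasurable
    (integral_uStat_eq_zero hZ hindep (.of_bound hg C (.of_forall hC)) hg0 p)]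
  simp_rw [uStat, mul_pow]
  rw [integral_const_mul]
  calc ((p.choose 2 : ℝ)⁻¹) ^ 2 * ∫ ω, (∑ e ∈ increasingPairs p, g (Z e.1 ω, Z e.2 ω)) ^ 2 ∂μ
      ≤ ((p.choose 2 : ℝ)⁻¹) ^ 2 * (p.choose 2 * (4 * p * C ^ 2)) := by
        gcongr
        exact integral_sq_sum_increasingPairs_le hZ hindep hg hC hg0 p
    _ = 4 * C ^ 2 * (p / p.choose 2) := by
        rcases eq_or_ne (p.choose 2 : ℝ) 0 with h | h
        · simp [h]
        · field_simp

lemma tendstoInMeasure_uStat_zero (hZ : ∀ i, μ.map (Z i) = ν) (hindep : iIndepFun Z μ)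
    {g : α × α → ℝ} (hg : AEStronglyMeasurable g (ν.prod ν)) {C : ℝ} (hC : ∀ z, |g z| ≤ C)
    (hg0 : ∫ z, g z ∂(ν.prod ν) = 0) :
    TendstoInMeasure μ (uStat g Z) atTop (fun _ ↦ 0) := by
  have hmemLp (p : ℕ) : MemLp (uStat g Z p) 2 μ :=
    (memLp_finsetSum (f := fun e ω ↦ g (Z e.1 ω, Z e.2 ω)) _ fun e he ↦ .of_bound
      (aestronglyMeasurable_comp_pair hZ hindep hg (ne_of_mem_increasingPairs he)) C
      (.of_forall fun ω ↦ hC _)).const_mul _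
  rw [tendstoInMeasure_iff_dist]
  intro ε hε
  have hchebyshev (p : ℕ) : μ {ω | ε ≤ dist (uStat g Z p ω) 0}
      ≤ ENNReal.ofReal (4 * C ^ 2 * (p / p.choose 2) / ε ^ 2) := by
    have h := meas_ge_le_variance_div_sq (hmemLp p) hε
    rw [integral_uStat_eq_zero hZ hindep (.of_bound hg C (.of_forall hC)) hg0 p] at h
    simp only [Real.dist_eq]
    exact h.trans <| ENNReal.ofReal_le_ofReal <| by
      gcongr; exact variance_uStat_le hZ hindep hg hC hg0 p
  refine tendsto_of_tendsto_of_tendsto_of_le_of_le tendsto_const_nhds ?_ (fun _ ↦ zero_le)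
    hchebyshev
  simpa using ENNReal.tendsto_ofReal
    ((tendsto_natCast_div_choose_two.const_mul (4 * C ^ 2)).div_const (ε ^ 2))

theorem tendstoInMeasure_uStat_of_bounded (hZ : ∀ i, μ.map (Z i) = ν) (hindep : iIndepFun Z μ)
    {g : α × α → ℝ} (hg : AEStronglyMeasurable g (ν.prod ν)) {C : ℝ} (hC : ∀ z, |g z| ≤ C) :
    TendstoInMeasure μ (uStat g Z) atTop (fun _ ↦ ∫ z, g z ∂(ν.prod ν)) := by
  set m := ∫ z, g z ∂(ν.prod ν)
  have hcentered := tendstoInMeasure_uStat_zero hZ hindep (g := fun z ↦ g z - m)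
    (hg.sub aestronglyMeasurable_const) (C := C + |m|)
    (fun z ↦ (abs_sub _ _).trans (by gcongr; exact hC z))
    (by rw [integral_sub (.of_bound hg C (.of_forall hC)) (integrable_const m)]; simp [m])
  rw [tendstoInMeasure_iff_dist] at hcentered ⊢
  intro ε hε
  refine (hcentered ε hε).congr' ?_
  filter_upwards [eventually_ge_atTop 2] with p hp
  simp only [uStat_sub_const g m Z hp, Real.dist_eq, sub_zero]

lemma lintegral_enorm_uStat_le (hZ : ∀ i, μ.map (Z i) = ν) (hindep : iIndepFun Z μ)
    {g : α × α → ℝ} (hg : AEStronglyMeasurable g (ν.prod ν)) (p : ℕ) :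
    ∫⁻ ω, ‖uStat g Z p ω‖ₑ ∂μ ≤ ∫⁻ z, ‖g z‖ₑ ∂(ν.prod ν) := by
  calc ∫⁻ ω, ‖uStat g Z p ω‖ₑ ∂μ
      ≤ ∫⁻ ω, ‖(p.choose 2 : ℝ)⁻¹‖ₑ * ∑ e ∈ increasingPairs p, ‖g (Z e.1 ω, Z e.2 ω)‖ₑ ∂μ :=
        lintegral_mono fun ω ↦ by
          rw [uStat, enorm_mul]
          gcongr
          exact enorm_sum_le _ _
    _ = ‖(p.choose 2 : ℝ)⁻¹‖ₑ * (p.choose 2 * ∫⁻ z, ‖g z‖ₑ ∂(ν.prod ν)) := by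
        rw [lintegral_const_mul' _ _ enorm_ne_top, lintegral_finsetSum' _ fun e he ↦
          (aestronglyMeasurable_comp_pair hZ hindep hg (ne_of_mem_increasingPairs he)).enorm,
          sum_congr rfl fun e he ↦
            lintegral_enorm_comp_pair hZ hindep hg (ne_of_mem_increasingPairs he), sum_const,
          card_increasingPairs, nsmul_eq_mul]
    _ ≤ ∫⁻ z, ‖g z‖ₑ ∂(ν.prod ν) := by
        rw [← mul_assoc]
        refine mul_le_of_le_one_left zero_le ?_
        rcases eq_or_ne (p.choose 2) 0 with h | h
        · simp [h]
        · simp [enorm_inv, h]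

theorem tendstoInMeasure_uStat (hZ : ∀ i, μ.map (Z i) = ν) (hindep : iIndepFun Z μ)
    {g : α × α → ℝ} (hg : Integrable g (ν.prod ν)) :
    TendstoInMeasure μ (uStat g Z) atTop (fun _ ↦ ∫ z, g z ∂(ν.prod ν)) := by
  have htrunc (n : ℕ) : AEStronglyMeasurable (truncation g n) (ν.prod ν) := hg.1.truncation
  refine tendstoInMeasure_of_lintegral_approx (g := fun n ↦ uStat (truncation g n) Z)
    (G := fun n _ ↦ ∫ z, truncation g n z ∂(ν.prod ν))
    (fun n ↦ tendstoInMeasure_uStat_of_bounded hZ hindep (htrunc n) (abs_truncation_le_bound g n))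
    (fun n p ↦ (aestronglyMeasurable_uStat hZ hindep hg.1 p).sub
      (aestronglyMeasurable_uStat hZ hindep (htrunc n) p))
    (fun n p ↦ ?_) (fun n ↦ aestronglyMeasurable_const.sub aestronglyMeasurable_const) (fun n ↦ ?_)
    (tendsto_lintegral_enorm_sub_truncation hg)
  · simp_rw [uStat_sub]
    exact lintegral_enorm_uStat_le hZ hindep (hg.1.sub (htrunc n)) p
  · rw [lintegral_const, measure_univ, mul_one, enorm_sub_rev,
      ← integral_sub hg hg.1.integrable_truncation]
    exact enorm_integral_le_lintegral_enorm _

end UStatistic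

theorem ustat_mean_tendstoInMeasure_general {Ω : Type*} [MeasurableSpace Ω]
    (μ : Measure Ω) [IsProbabilityMeasure μ] (ρ : ℝ) (hρ : |ρ| < 1)
    (Z : ℕ → Ω → ℝ)
    (hZ : ∀ i, Measure.map (Z i) μ = gaussianReal 0 1)
    (hindep : iIndepFun Z μ) :
    TendstoInMeasure μ
      (fun p ω => ((p.choose 2 : ℝ))⁻¹ *
        ∑ u ∈ Finset.range p, ∑ v ∈ Finset.Ioo u p,
          Real.exp (-ρ * Z u ω * Z v ω))
      atTop
      (fun _ => (Real.sqrt (1 - ρ ^ 2))⁻¹) := by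
  have hρ2 : ρ ^ 2 < 1 := (sq_lt_one_iff_abs_lt_one ρ).2 hρ
  rw [← integral_exp_neg_mul_mul_gaussianReal_prod hρ2]
  convert tendstoInMeasure_uStat hZ hindep (integrable_exp_neg_mul_mul_gaussianReal_prod hρ2)
    using 2 with p
  ext ω
  rw [uStat, sum_range_sum_Ioo_eq_sum_increasingPairs p fun u v ↦ rexp (-ρ * Z u ω * Z v ω)]

theorem ustat_mean_tendstoInMeasure {Ω : Type*} [MeasurableSpace Ω]
    (μ : Measure Ω) [IsProbabilityMeasure μ] (ρ : ℝ) (hρ0 : ρ ≠ 0) (hρ : |ρ| < 1)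
    (Z : ℕ → Ω → ℝ)
    (hZ : ∀ i, Measure.map (Z i) μ = gaussianReal 0 1)
    (hmeas : ∀ i, Measurable (Z i))
    (hindep : iIndepFun Z μ) :
    TendstoInMeasure μ
      (fun p ω => ((p.choose 2 : ℝ))⁻¹ *
        ∑ u ∈ Finset.range p, ∑ v ∈ Finset.Ioo u p,
          Real.exp (-ρ * Z u ω * Z v ω))
      atTop
      (fun _ => (Real.sqrt (1 - ρ ^ 2))⁻¹) :=
  ustat_mean_tendstoInMeasure_general μ ρ hρ Z hZ hindep
end

section
/- Fix |ρ| < 1 and p ≥ 2, and let f₁ = (p choose 2)⁻¹ Σ_{1 ≤ u < v ≤ p} f_{uv} be the uniform mixture of the densities f_{uv} of the Gaussian measures N(0, M_p(u,v,ρ)⁻¹), and let f₀ be the standard p-variate Gaussian density. Then for all x ∈ ℝᵖ, f₁(x)/f₀(x) = √(1−ρ²) · (p choose 2)⁻¹ · Σ_{1 ≤ u < v ≤ p} exp(−ρ x_u x_v). -/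
/-!
The precision matrix `M = M_p(u,v,ρ)` factors as `(1 + ρ E_vu) D (1 + ρ E_uv)` with two
unipotent transvections and `D` the diagonal matrix with `1 - ρ²` at `v` and `1` elsewhere, so
`det M = 1 - ρ²`. Its quadratic form is `‖x‖² + 2ρ x_u x_v`, hence each `f_uv / f₀` equals
`√(det M) · exp(-ρ x_u x_v)`, and the ratio of the mixture is the average of these terms.
-/

open MeasureTheory

/-- The `p × p` real matrix whose diagonal entries are `1`, whose `(u,v)` and `(v,u)`
entries are `ρ`, and whose remaining entries are `0`. -/
def Mmat (p : ℕ) (u v : Fin p) (ρ : ℝ) : Matrix (Fin p) (Fin p) ℝ :=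
  fun i j => if i = j then 1 else if (i = u ∧ j = v) ∨ (i = v ∧ j = u) then ρ else 0

/-- The Lebesgue density of the centered `p`-variate Gaussian measure with covariance
matrix `S`. -/
noncomputable def gaussianDensity (p : ℕ) (S : Matrix (Fin p) (Fin p) ℝ)
    (x : Fin p → ℝ) : ℝ :=
  (Real.sqrt ((2 * Real.pi) ^ p * S.det))⁻¹ *
    Real.exp (-(1 / 2) * dotProduct x (Matrix.mulVec S⁻¹ x))

/-- The uniform mixture over pairs `u < v` of the Gaussian densities with covariance
`(M_p(u,v,ρ))⁻¹`. -/
noncomputable def mixtureDensity (p : ℕ) (ρ : ℝ) (x : Fin p → ℝ) : ℝ :=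
  ((p.choose 2 : ℝ))⁻¹ *
    ∑ q ∈ Finset.univ.filter (fun q : Fin p × Fin p => q.1 < q.2),
      gaussianDensity p (Mmat p q.1 q.2 ρ)⁻¹ x

open Matrix

namespace Matrix

variable {n R : Type*} [DecidableEq n]

theorem diagonal_update_one_eq_one_add_single [Ring R] (j : n) (d : R) :
    diagonal (Function.update (1 : n → R) j d) = 1 + single j j (d - 1) := by
  ext a b
  by_cases hab : a = b
  · subst hab
    by_cases haj : a = j
    · subst haj; simp
    · simp [haj, Ne.symm haj]
  · simp only [diagonal_apply_ne _ hab, Matrix.add_apply, one_apply_ne hab, single_apply]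
    grind

variable [Fintype n]

theorem transvection_mul_diagonal_mul_transvection [CommRing R] {i j : n} (hij : i ≠ j)
    (c : R) :
    transvection j i c * diagonal (Function.update 1 j (1 - c ^ 2)) * transvection i j c =
      1 + single i j c + single j i c := by
  rw [diagonal_update_one_eq_one_add_single, transvection, transvection]
  simp only [mul_add, add_mul, Matrix.one_mul, Matrix.mul_one, single_mul_single_same,
    single_mul_single_of_ne _ _ _ _ hij, single_mul_single_of_ne _ _ _ _ hij.symm, add_zero]
  have hcancel : single j j (1 - c ^ 2 - 1) + single j j (c * c) = 0 := by
    rw [← single_add, show 1 - c ^ 2 - 1 + c * c = 0 by ring, single_zero]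
  linear_combination (norm := abel) hcancel

theorem det_one_add_single_add_single [CommRing R] {i j : n} (hij : i ≠ j) (c : R) :
    (1 + single i j c + single j i c).det = 1 - c ^ 2 := by
  rw [← transvection_mul_diagonal_mul_transvection hij, det_mul, det_mul,
    det_transvection_of_ne _ _ hij.symm, det_transvection_of_ne _ _ hij, det_diagonal,
    Finset.prod_update_of_mem (Finset.mem_univ j)]
  simp

theorem dotProduct_single_mulVec [CommSemiring R] (a b : n) (c : R) (x : n → R) :
    x ⬝ᵥ single a b c *ᵥ x = c * x a * x b := by
  rw [single_mulVec_eq, dotProduct_smul, dotProduct_single, smul_eq_mul, mul_one]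
  ring

end Matrix

section Mmat

variable {p : ℕ} {u v : Fin p}

theorem Mmat_eq_one_add_single_add_single (huv : u ≠ v) (ρ : ℝ) :
    Mmat p u v ρ = 1 + single u v ρ + single v u ρ := by
  ext i j
  simp only [Mmat, Matrix.add_apply, one_apply, single_apply]
  grind

theorem det_Mmat (huv : u ≠ v) (ρ : ℝ) : (Mmat p u v ρ).det = 1 - ρ ^ 2 := by
  rw [Mmat_eq_one_add_single_add_single huv, det_one_add_single_add_single huv]

theorem dotProduct_Mmat_mulVec (huv : u ≠ v) (ρ : ℝ) (x : Fin p → ℝ) :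
    x ⬝ᵥ Mmat p u v ρ *ᵥ x = x ⬝ᵥ x + 2 * ρ * x u * x v := by
  rw [Mmat_eq_one_add_single_add_single huv, add_mulVec, add_mulVec, one_mulVec,
    dotProduct_add, dotProduct_add, dotProduct_single_mulVec, dotProduct_single_mulVec]
  ring

end Mmat

section gaussianDensity

variable {p : ℕ}

theorem gaussianDensity_pos {S : Matrix (Fin p) (Fin p) ℝ} (hS : 0 < S.det) (x : Fin p → ℝ) :
    0 < gaussianDensity p S x := by
  unfold gaussianDensity
  positivity

theorem gaussianDensity_inv_eq {S : Matrix (Fin p) (Fin p) ℝ} (hS : 0 < S.det)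
    (x : Fin p → ℝ) :
    gaussianDensity p S⁻¹ x =
      √S.det * Real.exp (-(1 / 2) * (x ⬝ᵥ S *ᵥ x - x ⬝ᵥ x)) * gaussianDensity p 1 x := by
  have h2pi : (0 : ℝ) ≤ (2 * Real.pi) ^ p := by positivity
  rw [gaussianDensity, gaussianDensity, nonsing_inv_nonsing_inv _ hS.ne'.isUnit,
    det_nonsing_inv, Ring.inverse_eq_inv, inv_one, one_mulVec, det_one, mul_one,
    Real.sqrt_mul h2pi, Real.sqrt_inv, mul_inv, inv_inv]
  rw [show -(1 / 2) * x ⬝ᵥ S *ᵥ x = -(1 / 2) * (x ⬝ᵥ S *ᵥ x - x ⬝ᵥ x) + -(1 / 2) * x ⬝ᵥ x by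
    ring, Real.exp_add]
  ring

theorem gaussianDensity_Mmat_inv {u v : Fin p} (huv : u ≠ v) {ρ : ℝ} (hρ : |ρ| < 1)
    (x : Fin p → ℝ) :
    gaussianDensity p (Mmat p u v ρ)⁻¹ x =
      √(1 - ρ ^ 2) * Real.exp (-ρ * x u * x v) * gaussianDensity p 1 x := by
  have hdet : 0 < (Mmat p u v ρ).det := by
    rw [det_Mmat huv, sub_pos, sq_lt_one_iff_abs_lt_one]
    exact hρ
  rw [gaussianDensity_inv_eq hdet, det_Mmat huv, dotProduct_Mmat_mulVec huv]
  ring_nf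

end gaussianDensity

theorem likelihood_ratio_of_mixture_general (p : ℕ) (ρ : ℝ) (hρ : |ρ| < 1)
    (x : Fin p → ℝ) :
    mixtureDensity p ρ x / gaussianDensity p 1 x =
      Real.sqrt (1 - ρ ^ 2) * ((p.choose 2 : ℝ))⁻¹ *
        ∑ q ∈ Finset.univ.filter (fun q : Fin p × Fin p => q.1 < q.2),
          Real.exp (-ρ * x q.1 * x q.2) := by
  have hf₀ : gaussianDensity p 1 x ≠ 0 := (gaussianDensity_pos (by simp) x).ne'
  rw [mixtureDensity, Finset.sum_congr rfl fun q hq =>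
    gaussianDensity_Mmat_inv (Finset.mem_filter.1 hq).2.ne hρ x, ← Finset.sum_mul,
    ← Finset.mul_sum]
  field_simp

theorem likelihood_ratio_of_mixture (p : ℕ) (hp : 2 ≤ p) (ρ : ℝ) (hρ : |ρ| < 1)
    (x : Fin p → ℝ) :
    mixtureDensity p ρ x / gaussianDensity p 1 x =
      Real.sqrt (1 - ρ ^ 2) * ((p.choose 2 : ℝ))⁻¹ *
        ∑ q ∈ Finset.univ.filter (fun q : Fin p × Fin p => q.1 < q.2),
          Real.exp (-ρ * x q.1 * x q.2) :=
  likelihood_ratio_of_mixture_general p ρ hρ x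
end
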